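/- Let μ and ν be probability measures on a measurable space X, let C ≥ 0, and let u : X → ℝ be measurable with c ≤ u ≤ M for some constants 0 < c ≤ M. Suppose that for every α > 1 one has (∫ u^{1/α} dμ)^α ≤ exp(C·α/(α−1)) · ∫ u dν. Then ∫ log u dμ ≤ log(∫ u dν) + C. -/

import Mathlib

/-!
Jensen's inequality for the concave function `log`, applied to `u ^ (1 / α)`, gives
`∫ log u dμ ≤ α log ∫ u ^ (1 / α) dμ`. Taking logarithms in the Harnack inequality bounds the
right-hand side by `log ∫ u dν + C α / (α - 1)`, and `C α / (α - 1) → C` as `α → ∞`.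
-/

open MeasureTheory Real Filter Set Topology

section
variable {X : Type*} [MeasurableSpace X] {μ : Measure X}

lemma integrable_comp_of_mem_Icc [IsFiniteMeasure μ] {u : X → ℝ} {g : ℝ → ℝ} {a b : ℝ}
    (hu : Measurable u) (hg : Measurable g) (hgc : ContinuousOn g (Icc a b))
    (hab : ∀ x, u x ∈ Icc a b) : Integrable (fun x ↦ g (u x)) μ := by
  obtain ⟨K, hK⟩ := isCompact_Icc.exists_bound_of_continuousOn hgc
  exact .of_bound (hg.comp hu).aestronglyMeasurable K (ae_of_all _ fun x ↦ hK _ (hab x))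

lemma const_le_integral [IsProbabilityMeasure μ] {f : X → ℝ} {a : ℝ} (hf : Integrable f μ)
    (hfa : ∀ᵐ x ∂μ, a ≤ f x) : a ≤ ∫ x, f x ∂μ := by
  simpa using integral_mono_ae (integrable_const a) hf hfa

lemma integral_log_le_log_integral [IsProbabilityMeasure μ] {f : X → ℝ} {a : ℝ} (ha : 0 < a)
    (hfa : ∀ᵐ x ∂μ, a ≤ f x) (hf : Integrable f μ) (hlog : Integrable (fun x ↦ log (f x)) μ) :
    ∫ x, log (f x) ∂μ ≤ log (∫ x, f x ∂μ) :=
  (strictConcaveOn_log_Ioi.concaveOn.subset (Ici_subset_Ioi.2 ha) (convex_Ici a)).le_map_integral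
    (continuousOn_log.mono fun _ hx ↦ (ha.trans_le hx).ne') isClosed_Ici hfa hf hlog

lemma integral_log_le_mul_log_integral_rpow [IsProbabilityMeasure μ] {u : X → ℝ} {a α : ℝ}
    (ha : 0 < a) (hua : ∀ᵐ x ∂μ, a ≤ u x) (hα : 0 < α)
    (hint : Integrable (fun x ↦ u x ^ (1 / α)) μ) (hlog : Integrable (fun x ↦ log (u x)) μ) :
    ∫ x, log (u x) ∂μ ≤ α * log (∫ x, u x ^ (1 / α) ∂μ) := by
  have hroot : ∀ᵐ x ∂μ, a ^ (1 / α) ≤ u x ^ (1 / α) := hua.mono fun x hx ↦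
    rpow_le_rpow ha.le hx (by positivity)
  have hlog_root : ∀ᵐ x ∂μ, log (u x ^ (1 / α)) = 1 / α * log (u x) := hua.mono fun x hx ↦
    log_rpow (ha.trans_le hx) _
  have jensen := integral_log_le_log_integral (rpow_pos_of_pos ha _) hroot hint
    ((hlog.const_mul (1 / α)).congr (hlog_root.mono fun _ h ↦ h.symm))
  rw [integral_congr_ae hlog_root, integral_const_mul] at jensen
  rwa [one_div_mul_eq_div, div_le_iff₀' hα] at jensen

lemma tendsto_mul_div_sub_one_atTop (C : ℝ) :
    Tendsto (fun α : ℝ ↦ C * α / (α - 1)) atTop (𝓝 C) := by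
  have h : Tendsto (fun α : ℝ ↦ C + C / (α - 1)) atTop (𝓝 (C + 0)) :=
    tendsto_const_nhds.add <| tendsto_const_nhds.div_atTop <|
      tendsto_atTop_add_const_right _ _ tendsto_id
  rw [add_zero] at h
  refine h.congr' ((eventually_gt_atTop 1).mono fun α hα ↦ ?_)
  field_simp [(sub_pos.2 hα).ne']
  ring

end

theorem log_harnack_from_harnack_family_general
    {X : Type*} [MeasurableSpace X] (μ ν : Measure X)
    [IsProbabilityMeasure μ] [IsProbabilityMeasure ν]
    (C : ℝ) (u : X → ℝ) (hu : Measurable u)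
    (c M : ℝ) (hc : 0 < c)
    (hlb : ∀ x, c ≤ u x) (hub : ∀ x, u x ≤ M)
    (harnack : ∀ α : ℝ, 1 < α →
      (∫ x, (u x) ^ (1/α) ∂μ) ^ α ≤ Real.exp (C * α / (α - 1)) * ∫ x, u x ∂ν) :
    ∫ x, Real.log (u x) ∂μ ≤ Real.log (∫ x, u x ∂ν) + C := by
  have hbd (x : X) : u x ∈ Icc c M := ⟨hlb x, hub x⟩
  have hlog : Integrable (fun x ↦ log (u x)) μ :=
    integrable_comp_of_mem_Icc hu measurable_log
      (continuousOn_log.mono fun _ hx ↦ (hc.trans_le hx.1).ne') hbd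
  have hJ : 0 < ∫ x, u x ∂ν := hc.trans_le <|
    const_le_integral (integrable_comp_of_mem_Icc hu measurable_id continuousOn_id hbd)
      (ae_of_all _ hlb)
  have key (α : ℝ) (hα : 1 < α) :
      ∫ x, log (u x) ∂μ ≤ log (∫ x, u x ∂ν) + C * α / (α - 1) := by
    have hα₀ : 0 < α := one_pos.trans hα
    have hint : Integrable (fun x ↦ u x ^ (1 / α)) μ :=
      integrable_comp_of_mem_Icc hu (by fun_prop)
        (continuousOn_id.rpow_const fun _ _ ↦ Or.inr (by positivity)) hbd
    have hI : 0 < ∫ x, u x ^ (1 / α) ∂μ := (rpow_pos_of_pos hc _).trans_le <|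
      const_le_integral hint (ae_of_all _ fun x ↦ rpow_le_rpow hc.le (hlb x) (by positivity))
    have hlog_harnack := log_le_log (rpow_pos_of_pos hI α) (harnack α hα)
    rw [log_rpow hI, log_mul (exp_ne_zero _) hJ.ne', log_exp] at hlog_harnack
    linarith [integral_log_le_mul_log_integral_rpow hc (ae_of_all _ hlb) hα₀ hint hlog]
  exact ge_of_tendsto ((tendsto_mul_div_sub_one_atTop C).const_add _)
    (eventually_atTop.2 ⟨2, fun α hα ↦ key α (by linarith)⟩)

theorem log_harnack_from_harnack_family
    {X : Type*} [MeasurableSpace X] (μ ν : Measure X)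
    [IsProbabilityMeasure μ] [IsProbabilityMeasure ν]
    (C : ℝ) (hC : 0 ≤ C) (u : X → ℝ) (hu : Measurable u)
    (c M : ℝ) (hc : 0 < c) (hcM : c ≤ M)
    (hlb : ∀ x, c ≤ u x) (hub : ∀ x, u x ≤ M)
    (harnack : ∀ α : ℝ, 1 < α →
      (∫ x, (u x) ^ (1/α) ∂μ) ^ α ≤ Real.exp (C * α / (α - 1)) * ∫ x, u x ∂ν) :
    ∫ x, Real.log (u x) ∂μ ≤ Real.log (∫ x, u x ∂ν) + C :=
  log_harnack_from_harnack_family_general μ ν C u hu c M hc hlb hub harnack
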